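/- arXiv:math/0402451 — 7 statements merged into one kernel-verified Lean document; each statement's English description precedes it below -/
import Mathlib

section
/- Let E be a finite-dimensional real normed vector space and C : E → E a C^∞ map such that the induced multiplication (X∘Y)(p) = (D²C)(p)(X(p), Y(p)) on smooth vector fields is associative. Then (E, ∘) satisfies the Hertling–Manin F-manifold identity: for all smooth vector fields X, Y, Z, W one has P_{X∘Y}(Z,W) = X∘P_Y(Z,W) + Y∘P_X(Z,W), where P_X(Z,W) := [X, Z∘W] − [X,Z]∘W − Z∘[X,W]. -/
/-!
At a point `p` write `m = D²C(p)` and `T = D³C(p)`. Expanding the brackets, the derivatives of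
`Z` and `W` cancel in `P_X(Z,W)(p)`, which leaves `T(X,Z,W)` plus the failure of `DX(p)` to be a
derivation of `m`. The identity at `p` is then an algebraic consequence of the commutativity and
associativity of `m`, the total symmetry of `T`, and the derivative of the associative law,
`T(a, uv, w) + T(a,u,v) w = T(a, u, vw) + u T(a,v,w)`.
-/

open ContDiff

variable {E : Type*} [NormedAddCommGroup E] [NormedSpace ℝ E]

/-- Lie bracket of vector fields on a normed space:
`[X,Y](p) = (DY)(p)(X(p)) - (DX)(p)(Y(p))`. -/
noncomputable def lieB (X Y : E → E) : E → E :=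
  fun p => fderiv ℝ Y p (X p) - fderiv ℝ X p (Y p)

/-- Multiplication on vector fields induced by a vector potential `C`:
`(X ∘ Y)(p) = (D²C)(p)(X(p), Y(p))`. -/
noncomputable def mulC (C : E → E) (X Y : E → E) : E → E :=
  fun p => fderiv ℝ (fderiv ℝ C) p (X p) (Y p)

/-- The Hertling–Manin expression `P_X(Z,W) = [X, Z∘W] - [X,Z]∘W - Z∘[X,W]`. -/
noncomputable def hmP (C : E → E) (X Z W : E → E) : E → E :=
  fun p => lieB X (mulC C Z W) p - mulC C (lieB X Z) W p - mulC C Z (lieB X W) p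

noncomputable def derivationDefect (m : E →L[ℝ] E →L[ℝ] E) (A : E → E) (z w : E) : E :=
  m (A z) w + m z (A w) - A (m z w)

theorem hertlingManin_algebraic (m : E →L[ℝ] E →L[ℝ] E) (T : E →L[ℝ] E →L[ℝ] E →L[ℝ] E)
    (hm_comm : ∀ u v, m u v = m v u) (hm_assoc : ∀ u v w, m (m u v) w = m u (m v w))
    (hT₁₂ : ∀ a u v, T a u v = T u a v) (hT₂₃ : ∀ a u v, T a u v = T a v u)
    (hT_assoc : ∀ a u v w, T a (m u v) w + m (T a u v) w = T a u (m v w) + m u (T a v w))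
    (A B : E → E) (x y z w : E) :
    T (m x y) z w + derivationDefect m (fun a => T a x y + m (A a) y + m x (B a)) z w
      = m x (T y z w + derivationDefect m B z w) + m y (T x z w + derivationDefect m A z w) := by
  have hm_left_comm : ∀ u v w, m u (m v w) = m v (m u w) := fun u v w => by
    rw [← hm_assoc, hm_comm u v, hm_assoc]
  have h₁ := hT_assoc z x y w
  have h₂ := hT_assoc x z y w
  have h₃ := hT_assoc x y z w
  -- ordered rewriting with the commutativity laws brings all terms to one normal form
  simp only [derivationDefect, map_add, map_sub, add_apply, hm_assoc,
    hT₁₂, hT₂₃, hm_comm, hm_left_comm] at h₁ h₂ h₃ ⊢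
  linear_combination (norm := abel) h₁ - h₂ + h₃

section Potential

variable {C : E → E}

theorem contDiff_fderiv_fderiv (hC : ContDiff ℝ 3 C) : ContDiff ℝ 1 (fderiv ℝ (fderiv ℝ C)) :=
  (hC.fderiv_right (m := 2) (by norm_num)).fderiv_right (by norm_num)

theorem differentiable_mulC (hC : ContDiff ℝ 3 C) {Z W : E → E} (hZ : Differentiable ℝ Z)
    (hW : Differentiable ℝ W) : Differentiable ℝ (mulC C Z W) :=
  (((contDiff_fderiv_fderiv hC).differentiable (by norm_cast)).clm_apply hZ).clm_apply hW

theorem fderiv_mulC_apply (hC : ContDiff ℝ 3 C) {Z W : E → E} {p : E}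
    (hZ : DifferentiableAt ℝ Z p) (hW : DifferentiableAt ℝ W p) (a : E) :
    fderiv ℝ (mulC C Z W) p a
      = fderiv ℝ (fderiv ℝ (fderiv ℝ C)) p a (Z p) (W p)
        + fderiv ℝ (fderiv ℝ C) p (fderiv ℝ Z p a) (W p)
        + fderiv ℝ (fderiv ℝ C) p (Z p) (fderiv ℝ W p a) := by
  have hm := ((contDiff_fderiv_fderiv hC).differentiable (by norm_cast) p).hasFDerivAt
  have h : HasFDerivAt (mulC C Z W) _ p := (hm.clm_apply hZ.hasFDerivAt).clm_apply hW.hasFDerivAt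
  rw [h.fderiv]
  simp only [add_apply, ContinuousLinearMap.comp_apply, ContinuousLinearMap.flip_apply]
  abel

theorem fderiv_mulC_const_apply (hC : ContDiff ℝ 3 C) (p a u v : E) :
    fderiv ℝ (mulC C (fun _ => u) (fun _ => v)) p a = fderiv ℝ (fderiv ℝ (fderiv ℝ C)) p a u v := by
  simp [fderiv_mulC_apply hC (differentiableAt_const u) (differentiableAt_const v)]

theorem fderiv_fderiv_comm (hC : ContDiff ℝ 3 C) (p u v : E) :
    fderiv ℝ (fderiv ℝ C) p u v = fderiv ℝ (fderiv ℝ C) p v u :=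
  hC.contDiffAt.isSymmSndFDerivAt (by simp only [minSmoothness_of_isRCLikeNormedField]; norm_cast) u v

theorem fderiv_fderiv_fderiv_comm₁₂ (hC : ContDiff ℝ 3 C) (p a u v : E) :
    fderiv ℝ (fderiv ℝ (fderiv ℝ C)) p a u v = fderiv ℝ (fderiv ℝ (fderiv ℝ C)) p u a v := by
  rw [(hC.fderiv_right (m := 2) (by norm_num)).contDiffAt.isSymmSndFDerivAt
    (by simp only [minSmoothness_of_isRCLikeNormedField]; norm_cast) a u]

theorem fderiv_fderiv_fderiv_comm₂₃ (hC : ContDiff ℝ 3 C) (p a u v : E) :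
    fderiv ℝ (fderiv ℝ (fderiv ℝ C)) p a u v = fderiv ℝ (fderiv ℝ (fderiv ℝ C)) p a v u := by
  have h : mulC C (fun _ => u) (fun _ => v) = mulC C (fun _ => v) (fun _ => u) :=
    funext fun q => fderiv_fderiv_comm hC q u v
  rw [← fderiv_mulC_const_apply hC, h, fderiv_mulC_const_apply hC]

theorem fderiv_fderiv_fderiv_assoc (hC : ContDiff ℝ 3 C)
    (hassoc : ∀ p u v w : E,
      fderiv ℝ (fderiv ℝ C) p (fderiv ℝ (fderiv ℝ C) p u v) w
        = fderiv ℝ (fderiv ℝ C) p u (fderiv ℝ (fderiv ℝ C) p v w))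
    (p a u v w : E) :
    fderiv ℝ (fderiv ℝ (fderiv ℝ C)) p a (fderiv ℝ (fderiv ℝ C) p u v) w
        + fderiv ℝ (fderiv ℝ C) p (fderiv ℝ (fderiv ℝ (fderiv ℝ C)) p a u v) w
      = fderiv ℝ (fderiv ℝ (fderiv ℝ C)) p a u (fderiv ℝ (fderiv ℝ C) p v w)
        + fderiv ℝ (fderiv ℝ C) p u (fderiv ℝ (fderiv ℝ (fderiv ℝ C)) p a v w) := by
  have hconst : ∀ c : E, Differentiable ℝ fun _ : E => c := differentiable_const
  have h : mulC C (mulC C (fun _ => u) (fun _ => v)) (fun _ => w)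
      = mulC C (fun _ => u) (mulC C (fun _ => v) (fun _ => w)) :=
    funext fun q => hassoc q u v w
  have := congrArg (fun f => fderiv ℝ f p a) h
  rw [fderiv_mulC_apply hC (differentiable_mulC hC (hconst u) (hconst v) p) (hconst w p),
    fderiv_mulC_apply hC (hconst u p) (differentiable_mulC hC (hconst v) (hconst w) p)] at this
  simpa only [mulC, fderiv_mulC_const_apply hC, fderiv_fun_const, Pi.zero_apply, zero_apply,
    map_zero, add_zero] using this

theorem hmP_apply (hC : ContDiff ℝ 3 C) (X : E → E) {Z W : E → E} {p : E}
    (hZ : DifferentiableAt ℝ Z p) (hW : DifferentiableAt ℝ W p) :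
    hmP C X Z W p = fderiv ℝ (fderiv ℝ (fderiv ℝ C)) p (X p) (Z p) (W p)
      + derivationDefect (fderiv ℝ (fderiv ℝ C) p) (fderiv ℝ X p) (Z p) (W p) := by
  rw [hmP, lieB, fderiv_mulC_apply hC hZ hW]
  simp only [mulC, lieB, derivationDefect, map_sub, sub_apply]
  abel

end Potential

theorem stmt0_general {E : Type*} [NormedAddCommGroup E] [NormedSpace ℝ E]
    (C : E → E) (hC : ContDiff ℝ ∞ C)
    (hassoc : ∀ p u v w : E,
      fderiv ℝ (fderiv ℝ C) p (fderiv ℝ (fderiv ℝ C) p u v) w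
        = fderiv ℝ (fderiv ℝ C) p u (fderiv ℝ (fderiv ℝ C) p v w)) :
    ∀ X Y Z W : E → E, ContDiff ℝ ∞ X → ContDiff ℝ ∞ Y → ContDiff ℝ ∞ Z → ContDiff ℝ ∞ W →
      hmP C (mulC C X Y) Z W
        = fun p => mulC C X (hmP C Y Z W) p + mulC C Y (hmP C X Z W) p := by
  intro X Y Z W hX hY hZ hW
  funext p
  have hC₃ : ContDiff ℝ 3 C := hC.of_le (by norm_cast)
  have hdiff {V : E → E} (hV : ContDiff ℝ ∞ V) : DifferentiableAt ℝ V p :=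
    hV.differentiable (by norm_cast) p
  rw [hmP_apply hC₃ _ (hdiff hZ) (hdiff hW), funext (fderiv_mulC_apply hC₃ (hdiff hX) (hdiff hY))]
  simp only [mulC]
  rw [hmP_apply hC₃ X (hdiff hZ) (hdiff hW), hmP_apply hC₃ Y (hdiff hZ) (hdiff hW)]
  exact hertlingManin_algebraic _ _ (fderiv_fderiv_comm hC₃ p) (hassoc p)
    (fderiv_fderiv_fderiv_comm₁₂ hC₃ p) (fderiv_fderiv_fderiv_comm₂₃ hC₃ p)
    (fderiv_fderiv_fderiv_assoc hC₃ hassoc p) _ _ _ _ _ _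

/-- if the multiplication induced by a smooth vector potential `C` is
associative, then it satisfies the Hertling–Manin F-manifold identity. -/
theorem stmt0 {E : Type*} [NormedAddCommGroup E] [NormedSpace ℝ E] [FiniteDimensional ℝ E]
    (C : E → E) (hC : ContDiff ℝ ∞ C)
    (hassoc : ∀ p u v w : E,
      fderiv ℝ (fderiv ℝ C) p (fderiv ℝ (fderiv ℝ C) p u v) w
        = fderiv ℝ (fderiv ℝ C) p u (fderiv ℝ (fderiv ℝ C) p v w)) :
    ∀ X Y Z W : E → E, ContDiff ℝ ∞ X → ContDiff ℝ ∞ Y → ContDiff ℝ ∞ Z → ContDiff ℝ ∞ W →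
      hmP C (mulC C X Y) Z W
        = fun p => mulC C X (hmP C Y Z W) p + mulC C Y (hmP C X Z W) p :=
  stmt0_general C hC hassoc
end

section
/- Let E be a finite-dimensional real normed vector space and A : E → (E →L[ℝ] E →L[ℝ] E) a smooth map such that A(p) is symmetric for every p. Then the following are equivalent: (i) the λ-linear part of the curvature of the pencil ∇_λ vanishes, i.e. (DA)(p)(u)(v)(w) = (DA)(p)(v)(u)(w) for all p,u,v,w ∈ E; (ii) there exists a smooth map C : E → E with A(p) = (D²C)(p) for every p ∈ E, i.e. A(p)(v)(w) = (D²C)(p)(v,w) for all p,v,w. -/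
open ContDiff

variable {E : Type*} [NormedAddCommGroup E] [NormedSpace ℝ E]

/-- Multiplication on vector fields induced by a field of bilinear maps `A`:
`(X ∘ Y)(p) = A(p)(X(p))(Y(p))`. -/
noncomputable def mulA (A : E → (E →L[ℝ] E →L[ℝ] E)) (X Y : E → E) : E → E :=
  fun p => A p (X p) (Y p)

/-!
A symmetric `A` with symmetric derivative is a closed `1`-form with values in `E →L[ℝ] E`, so
by the Poincaré lemma on the convex space `E` it is `DB` for some `B`; the symmetry of `A`
says that `B` is in turn a closed `E`-valued `1`-form, hence `B = DC`. Conversely, `D(D²C)` is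
symmetric in its first two arguments by the symmetry of second derivatives applied to `DC`.
-/

theorem exists_contDiff_fderiv_eq_of_fderiv_symm {E F : Type*}
    [NormedAddCommGroup E] [NormedSpace ℝ E] [NormedAddCommGroup F] [NormedSpace ℝ F]
    [CompleteSpace F] (φ : E → E →L[ℝ] F) (hφ : ContDiff ℝ ∞ φ)
    (hclosed : ∀ p u v, fderiv ℝ φ p u v = fderiv ℝ φ p v u) :
    ∃ g : E → F, ContDiff ℝ ∞ g ∧ fderiv ℝ g = φ := by
  obtain ⟨g, hg⟩ := convex_univ.exists_forall_hasFDerivAt_of_fderiv_symmetric isOpen_univ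
    (hφ.differentiable (by simp)).differentiableOn fun p _ => hclosed p
  have hDg : fderiv ℝ g = φ := funext fun p => (hg p trivial).fderiv
  exact ⟨g, contDiff_infty_iff_fderiv.mpr ⟨fun p => (hg p trivial).differentiableAt, hDg ▸ hφ⟩,
    hDg⟩

/-- vanishing of the `λ`-linear part of the curvature of the pencil
is equivalent to the existence of a (global, smooth) vector potential `C` with
`A = D²C`. -/
theorem stmt3 {E : Type*} [NormedAddCommGroup E] [NormedSpace ℝ E] [FiniteDimensional ℝ E]
    (A : E → (E →L[ℝ] E →L[ℝ] E)) (hA : ContDiff ℝ ∞ A)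
    (hsymm : ∀ p u v : E, A p u v = A p v u) :
    (∀ p u v w : E, fderiv ℝ A p u v w = fderiv ℝ A p v u w) ↔
    (∃ C : E → E, ContDiff ℝ ∞ C ∧
      ∀ p v w : E, A p v w = fderiv ℝ (fderiv ℝ C) p v w) := by
  constructor
  · intro hDA
    obtain ⟨B, hB, hDB⟩ :=
      exists_contDiff_fderiv_eq_of_fderiv_symm A hA fun p u v => ContinuousLinearMap.ext (hDA p u v)
    obtain ⟨C, hC, hDC⟩ :=
      exists_contDiff_fderiv_eq_of_fderiv_symm B hB fun p u v => by rw [hDB]; exact hsymm p u v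
    exact ⟨C, hC, fun p v w => by rw [hDC, hDB]⟩
  · rintro ⟨C, hC, hAC⟩
    obtain rfl : A = fderiv ℝ (fderiv ℝ C) := funext fun p => by ext v w; exact hAC p v w
    have hDC : ContDiff ℝ ∞ (fderiv ℝ C) := (contDiff_infty_iff_fderiv.mp hC).2
    exact fun p u v w => congrArg (· w)
      ((hDC.contDiffAt.isSymmSndFDerivAt (by simpa using ENat.LEInfty.out)).eq u v)
end

section
/- Let E be a finite-dimensional real normed vector space and C : E → E a C^∞ map such that the induced multiplication (X∘Y)(p) = (D²C)(p)(X(p), Y(p)) is associative and admits an identity: a smooth vector field e with (D²C)(p)(e(p), v) = v for all p ∈ E, v ∈ E. Then the identity e satisfies condition (*): for every smooth vector field Y, ∇_Y e = Y ∘ (∇_e e), i.e. (De)(p)(Y(p)) = (D²C)(p)(Y(p), (De)(p)(e(p))) for all p. -/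
open ContDiff

variable {E : Type*} [NormedAddCommGroup E] [NormedSpace ℝ E]

/-!
Write `B = D²C` and `T = D³C`; both are symmetric tensors. Differentiating the identity
law `B(e, v) = v` in the direction `u` gives `B(De u, v) = -T(u, e, v)`, which is symmetric
in `u` and `v`; hence `De` is self-adjoint for `B`. Then
`De Y = B(e, De Y) = B(De e, Y) = B(Y, De e)`.
-/

section BilinearFields

variable {F G : Type*} [NormedAddCommGroup F] [NormedSpace ℝ F]
  [NormedAddCommGroup G] [NormedSpace ℝ G]

theorem fderiv_apply_apply_eq {B : E → F →L[ℝ] G →L[ℝ] E} {p : E}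
    (hB : DifferentiableAt ℝ B p) (u : E) (v : F) (w : G) :
    fderiv ℝ (fun q => B q v w) p u = fderiv ℝ B p u v w := by
  have h := (hB.hasFDerivAt.clm_apply (hasFDerivAt_const v p)).clm_apply
    (hasFDerivAt_const w p)
  simp [h.fderiv]

theorem fderiv_apply_apply_comm {B : E → F →L[ℝ] F →L[ℝ] E} {p : E}
    (hB : DifferentiableAt ℝ B p) (hsymm : ∀ q v w, B q v w = B q w v) (u : E) (v w : F) :
    fderiv ℝ B p u v w = fderiv ℝ B p u w v := by
  have hfun : (fun q => B q v w) = fun q => B q w v := funext fun q => hsymm q v w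
  rw [← fderiv_apply_apply_eq hB, hfun, fderiv_apply_apply_eq hB]

theorem apply_fderiv_apply_eq_neg_of_apply_eq_self {B : E → F →L[ℝ] G →L[ℝ] G} {e : E → F}
    {p : E} (hB : DifferentiableAt ℝ B p) (he : DifferentiableAt ℝ e p)
    (hid : ∀ q v, B q (e q) v = v) (u : E) (v : G) :
    B p (fderiv ℝ e p u) v = -fderiv ℝ B p u (e p) v := by
  have h := (hB.hasFDerivAt.clm_apply he.hasFDerivAt).clm_apply (hasFDerivAt_const v p)
  have hconst : (fun q => B q (e q) v) = fun _ => v := funext fun q => hid q v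
  rw [hconst] at h
  have h0 := congr($(h.unique (hasFDerivAt_const v p)) u)
  simp only [ContinuousLinearMap.flip_apply, add_apply,
    ContinuousLinearMap.comp_apply, zero_apply, map_zero, zero_add] at h0
  exact eq_neg_of_add_eq_zero_left h0

end BilinearFields

theorem isSymmSndFDerivAt_of_contDiff_two {F : Type*} [NormedAddCommGroup F]
    [NormedSpace ℝ F] {f : E → F} {n : WithTop ℕ∞} (hf : ContDiff ℝ n f) (hn : 2 ≤ n) (p : E) :
    IsSymmSndFDerivAt ℝ f p :=
  hf.contDiffAt.isSymmSndFDerivAt (by simpa using hn)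

theorem fderiv_fderiv_apply_fderiv_comm {C e : E → E} (hC : ContDiff ℝ 3 C) {p : E}
    (he : DifferentiableAt ℝ e p) (hid : ∀ q v, fderiv ℝ (fderiv ℝ C) q (e q) v = v)
    (u v : E) :
    fderiv ℝ (fderiv ℝ C) p (fderiv ℝ e p u) v = fderiv ℝ (fderiv ℝ C) p u (fderiv ℝ e p v) := by
  have hC' : ContDiff ℝ 2 (fderiv ℝ C) := hC.fderiv_right (by norm_num)
  have hB : DifferentiableAt ℝ (fderiv ℝ (fderiv ℝ C)) p :=
    (hC'.fderiv_right le_rfl).differentiable one_ne_zero p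
  have hBsymm : ∀ q, IsSymmSndFDerivAt ℝ C q :=
    isSymmSndFDerivAt_of_contDiff_two hC (by norm_num)
  have hTsymm : ∀ x y z, fderiv ℝ (fderiv ℝ (fderiv ℝ C)) p x y z
      = fderiv ℝ (fderiv ℝ (fderiv ℝ C)) p z y x := fun x y z => by
    rw [fderiv_apply_apply_comm hB hBsymm, isSymmSndFDerivAt_of_contDiff_two hC' le_rfl p,
      fderiv_apply_apply_comm hB hBsymm]
  rw [apply_fderiv_apply_eq_neg_of_apply_eq_self hB he hid, hBsymm, hTsymm,
    apply_fderiv_apply_eq_neg_of_apply_eq_self hB he hid]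

theorem stmt7_general {E : Type*} [NormedAddCommGroup E] [NormedSpace ℝ E]
    (C : E → E) (hC : ContDiff ℝ ∞ C)
    (e : E → E) (he : ContDiff ℝ ∞ e)
    (hid : ∀ p v : E, fderiv ℝ (fderiv ℝ C) p (e p) v = v) :
    ∀ Y : E → E, ContDiff ℝ ∞ Y →
      (fun p => fderiv ℝ e p (Y p)) = mulC C Y (fun p => fderiv ℝ e p (e p)) := by
  intro Y _
  funext p
  have hC3 : ContDiff ℝ 3 C := hC.of_le (WithTop.coe_le_coe.mpr le_top)
  have he' : DifferentiableAt ℝ e p := he.differentiable (by simp) p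
  calc fderiv ℝ e p (Y p)
      = fderiv ℝ (fderiv ℝ C) p (e p) (fderiv ℝ e p (Y p)) := (hid p _).symm
    _ = fderiv ℝ (fderiv ℝ C) p (fderiv ℝ e p (e p)) (Y p) :=
      (fderiv_fderiv_apply_fderiv_comm hC3 he' hid _ _).symm
    _ = fderiv ℝ (fderiv ℝ C) p (Y p) (fderiv ℝ e p (e p)) :=
      isSymmSndFDerivAt_of_contDiff_two hC3 (by norm_num) p _ _

/-- the identity `e` of an associative multiplication with a compatible
flat structure satisfies `∇_Y e = Y ∘ (∇_e e)` for every smooth `Y`. -/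
theorem stmt7 {E : Type*} [NormedAddCommGroup E] [NormedSpace ℝ E] [FiniteDimensional ℝ E]
    (C : E → E) (hC : ContDiff ℝ ∞ C)
    (hassoc : ∀ p u v w : E,
      fderiv ℝ (fderiv ℝ C) p (fderiv ℝ (fderiv ℝ C) p u v) w
        = fderiv ℝ (fderiv ℝ C) p u (fderiv ℝ (fderiv ℝ C) p v w))
    (e : E → E) (he : ContDiff ℝ ∞ e)
    (hid : ∀ p v : E, fderiv ℝ (fderiv ℝ C) p (e p) v = v) :
    ∀ Y : E → E, ContDiff ℝ ∞ Y →
      (fun p => fderiv ℝ e p (Y p)) = mulC C Y (fun p => fderiv ℝ e p (e p)) :=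
  stmt7_general C hC e he hid
end

section
/- Let E be a finite-dimensional real normed vector space and C : E → E a C^∞ map such that the induced multiplication ∘ is associative with identity e. If a smooth vector field ε satisfies condition (*) (∇_Y ε = Y ∘ (∇_e ε) for every smooth vector field Y), then ε' := ∇_e ε also satisfies condition (*): ∇_Y ε' = Y ∘ (∇_e ε') for every smooth vector field Y. -/
open ContDiff

variable {E : Type*} [NormedAddCommGroup E] [NormedSpace ℝ E]

/-- the sheaf of vector fields satisfying condition (*) is stable
under `∇_e`. -/
theorem stmt9 {E : Type*} [NormedAddCommGroup E] [NormedSpace ℝ E] [FiniteDimensional ℝ E]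
    (C : E → E) (hC : ContDiff ℝ ∞ C)
    (hassoc : ∀ p u v w : E,
      fderiv ℝ (fderiv ℝ C) p (fderiv ℝ (fderiv ℝ C) p u v) w
        = fderiv ℝ (fderiv ℝ C) p u (fderiv ℝ (fderiv ℝ C) p v w))
    (e : E → E) (he : ContDiff ℝ ∞ e)
    (hid : ∀ p v : E, fderiv ℝ (fderiv ℝ C) p (e p) v = v)
    (eps : E → E) (heps : ContDiff ℝ ∞ eps)
    (hstar : ∀ Y : E → E, ContDiff ℝ ∞ Y →
      (fun p => fderiv ℝ eps p (Y p)) = mulC C Y (fun p => fderiv ℝ eps p (e p))) :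
    ∀ Y : E → E, ContDiff ℝ ∞ Y →
      (fun p => fderiv ℝ (fun q => fderiv ℝ eps q (e q)) p (Y p))
        = mulC C Y (fun p => fderiv ℝ (fun q => fderiv ℝ eps q (e q)) p (e p)) := by
  -- notation
  let B : E → E →L[ℝ] E →L[ℝ] E := fderiv ℝ (fderiv ℝ C)
  let ε' : E → E := fun q => fderiv ℝ eps q (e q)
  -- smoothness
  have hC1 : ContDiff ℝ ∞ (fderiv ℝ C) := hC.fderiv_right (by simp)
  have hB : ContDiff ℝ ∞ B := hC1.fderiv_right (by simp)
  have hfe : ContDiff ℝ ∞ (fderiv ℝ eps) := heps.fderiv_right (by simp)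
  have heps' : ContDiff ℝ ∞ ε' := hfe.clm_apply he
  have dB : Differentiable ℝ B := hB.differentiable (by simp)
  have dfe : Differentiable ℝ (fderiv ℝ eps) := hfe.differentiable (by simp)
  have de : Differentiable ℝ e := he.differentiable (by simp)
  have dε' : Differentiable ℝ ε' := heps'.differentiable (by simp)
  -- pointwise form of (*) with constant fields
  have hrel : ∀ p v, fderiv ℝ eps p v = B p v (ε' p) := by
    intro p v
    have := congrFun (hstar (fun _ => v) contDiff_const) p
    simpa [mulC] using this
  -- derivative of the second fderiv of eps
  have hA : ∀ p a v, fderiv ℝ (fderiv ℝ eps) p a v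
      = B p v (fderiv ℝ ε' p a) + fderiv ℝ B p a v (ε' p) := by
    intro p a v
    have h1 : (fun q => fderiv ℝ eps q v) = fun q => B q v (ε' q) := by
      funext q; exact hrel q v
    have lhs : fderiv ℝ (fun q => fderiv ℝ eps q v) p a = fderiv ℝ (fderiv ℝ eps) p a v := by
      rw [fderiv_clm_apply (dfe p) (differentiableAt_const v)]
      simp
    have rhs : fderiv ℝ (fun q => B q v (ε' q)) p a
        = B p v (fderiv ℝ ε' p a) + fderiv ℝ B p a v (ε' p) := by
      have dc : DifferentiableAt ℝ (fun q => B q v) p := (dB p).clm_apply (differentiableAt_const v)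
      rw [fderiv_clm_apply dc (dε' p)]
      have hcv : fderiv ℝ (fun q => B q v) p a = fderiv ℝ B p a v := by
        rw [fderiv_clm_apply (dB p) (differentiableAt_const v)]
        simp
      simp [hcv]
    rw [← lhs, h1, rhs]
  -- symmetry of the second derivative of eps
  have hsym_eps : ∀ p v w, fderiv ℝ (fderiv ℝ eps) p v w = fderiv ℝ (fderiv ℝ eps) p w v := by
    intro p v w
    exact second_derivative_symmetric (fun y => (heps.differentiable (by simp) y).hasFDerivAt)
      (dfe p).hasFDerivAt v w
  -- symmetry of the second derivative of fderiv C
  have hsym_B : ∀ p v w, fderiv ℝ B p v w = fderiv ℝ B p w v := by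
    intro p v w
    exact second_derivative_symmetric (fun y => (hC1.differentiable (by simp) y).hasFDerivAt)
      (dB p).hasFDerivAt v w
  -- differentiating the identity axiom
  have hids : ∀ p u, fderiv ℝ B p u (e p) = - (B p (fderiv ℝ e p u)) := by
    intro p u
    have hconst : (fun q => B q (e q)) = fun _ => ContinuousLinearMap.id ℝ E := by
      funext q; ext v; simpa using hid q v
    have h0 : fderiv ℝ (fun q => B q (e q)) p = 0 := by rw [hconst]; exact fderiv_const_apply _
    have h1 : fderiv ℝ (fun q => B q (e q)) p
        = (B p).comp (fderiv ℝ e p) + (fderiv ℝ B p).flip (e p) :=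
      fderiv_clm_apply (dB p) (de p)
    have h2 : B p (fderiv ℝ e p u) + fderiv ℝ B p u (e p) = 0 := by
      have := congrFun (congrArg DFunLike.coe (h1.symm.trans h0)) u
      simpa using this
    exact eq_neg_of_add_eq_zero_right h2
  -- derivative of ε'
  have hkey : ∀ p u, fderiv ℝ ε' p u = B p u (fderiv ℝ ε' p (e p)) := by
    intro p u
    have h1 : fderiv ℝ ε' p u = fderiv ℝ eps p (fderiv ℝ e p u) + fderiv ℝ (fderiv ℝ eps) p u (e p) := by
      have := fderiv_clm_apply (dfe p) (de p)
      have h := congrFun (congrArg DFunLike.coe this) u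
      simpa using h
    rw [h1, hsym_eps p u (e p), hA p (e p) u, hrel p (fderiv ℝ e p u),
      hsym_B p (e p) u, hids p u]
    simp
  -- conclude
  intro Y hY
  funext p
  show fderiv ℝ ε' p (Y p) = mulC C Y (fun q => fderiv ℝ ε' q (e q)) p
  rw [hkey p (Y p)]
  rfl
end

section
/- Let E be a finite-dimensional real normed vector space and C : E → E a C^∞ map such that the induced multiplication ∘ is associative with identity e, where e is a constant map (so ∇e = 0 and ∇_e e = 0). Let E' be a smooth vector field and for each λ ≠ 0 define the operator H_λ on smooth vector fields by H_λ(Y) := Y∘E' + λ⁻¹(∇_Y E' − Y). Then the following are equivalent: (i) for every λ ≠ 0 and all smooth vector fields X, Y, the flatness condition holds: H_λ(X∘Y) = X∘H_λ(Y) + λ⁻¹(∇_X(H_λ(Y)) − X∘Y − H_λ(∇_X Y)); (ii) E' is an Euler field of weight 1 compatible with ∇, i.e. P_{E'}(X,Y) = X∘Y for all smooth vector fields X, Y, and for every constant vector field Z the bracket [E', Z] is again a constant vector field. -/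
open ContDiff

variable {E : Type*} [NormedAddCommGroup E] [NormedSpace ℝ E]

/-!
Write `B = D²C`, `T = D³C`. Expanding the flatness condition for `H_λ`, the terms free of `λ⁻¹`
cancel by associativity of `B`, and what remains is
`λ⁻¹ (P_{E'}(X,Y) - X∘Y) + λ⁻² ∇²E'(X,Y)`, where the symmetry of `T` lets one trade
`T(X,Y,E')` for `T(E',X,Y)`. This expression is tensorial in `X`, `Y` and polynomial in `λ⁻¹`, so
it vanishes for all `λ ≠ 0` and all fields iff both coefficients vanish pointwise. Finally
`[E', Z] = -∇_Z E'` for constant `Z`, which is constant for every `Z` iff `∇²E' = 0`.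
-/

section Calculus

variable {𝕜 : Type*} [NontriviallyNormedField 𝕜]
  {V F G K : Type*} [NormedAddCommGroup V] [NormedSpace 𝕜 V] [NormedAddCommGroup F]
  [NormedSpace 𝕜 F] [NormedAddCommGroup G] [NormedSpace 𝕜 G] [NormedAddCommGroup K]
  [NormedSpace 𝕜 K]

theorem fderiv_clm_apply_apply {f : V → F →L[𝕜] G} {g : V → F} {p : V}
    (hf : DifferentiableAt 𝕜 f p) (hg : DifferentiableAt 𝕜 g p) (x : V) :
    fderiv 𝕜 (fun q => f q (g q)) p x = fderiv 𝕜 f p x (g p) + f p (fderiv 𝕜 g p x) := by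
  rw [fderiv_clm_apply hf hg, add_comm]
  rfl

theorem fderiv_clm_apply₂_apply {f : V → F →L[𝕜] G →L[𝕜] K} {g : V → F} {h : V → G} {p : V}
    (hf : DifferentiableAt 𝕜 f p) (hg : DifferentiableAt 𝕜 g p) (hh : DifferentiableAt 𝕜 h p)
    (x : V) :
    fderiv 𝕜 (fun q => f q (g q) (h q)) p x
      = fderiv 𝕜 f p x (g p) (h p) + f p (fderiv 𝕜 g p x) (h p) + f p (g p) (fderiv 𝕜 h p x) := by
  rw [fderiv_clm_apply_apply (hf.clm_apply hg) hh, fderiv_clm_apply_apply hf hg]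
  rfl

theorem fderiv_clm_apply_const_apply {f : V → F →L[𝕜] G} {p : V} (hf : DifferentiableAt 𝕜 f p)
    (x : V) (y : F) : fderiv 𝕜 (fun q => f q y) p x = fderiv 𝕜 f p x y := by
  simp [fderiv_clm_apply_apply hf (differentiableAt_const y)]

theorem exists_forall_eq_iff_fderiv_eq_zero [IsRCLikeNormedField 𝕜] {f : V → F}
    (hf : Differentiable 𝕜 f) : (∃ w, ∀ p, f p = w) ↔ ∀ p, fderiv 𝕜 f p = 0 := by
  refine ⟨fun ⟨w, hw⟩ p => ?_, fun h => ⟨f 0, fun p => is_const_of_fderiv_eq_zero hf h p 0⟩⟩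
  rw [show f = fun _ => w from funext hw, fderiv_const_apply]

theorem forall_inv_smul_add_inv_sq_smul_eq_zero_iff {M : Type*} [AddCommGroup M] [Module 𝕜 M]
    [CharZero 𝕜] (u v : M) :
    (∀ l : 𝕜, l ≠ 0 → l⁻¹ • u + (l⁻¹) ^ 2 • v = 0) ↔ u = 0 ∧ v = 0 := by
  refine ⟨fun h => ?_, fun ⟨hu, hv⟩ _ _ => by simp [hu, hv]⟩
  have h₁ : u + v = 0 := by simpa using h 1 one_ne_zero
  have h₂ : -u + v = 0 := by simpa using h (-1) (neg_ne_zero.2 one_ne_zero)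
  have hv : (2 : 𝕜) • v = 0 := by
    rw [two_smul]; linear_combination (norm := module) h₁ + h₂
  have hv : v = 0 := (smul_eq_zero.1 hv).resolve_left two_ne_zero
  exact ⟨by simpa [hv] using h₁, hv⟩

theorem forall_contDiff_pair_iff {n : WithTop ℕ∞} (P : V → F → G → Prop) :
    (∀ (X : V → F) (Y : V → G), ContDiff 𝕜 n X → ContDiff 𝕜 n Y → ∀ p, P p (X p) (Y p))
      ↔ ∀ p a b, P p a b :=
  ⟨fun h p a b => h (fun _ => a) (fun _ => b) contDiff_const contDiff_const p,
    fun h X Y _ _ p => h p (X p) (Y p)⟩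

end Calculus

section Symmetry

variable {F : Type*} [NormedAddCommGroup F] [NormedSpace ℝ F] {C : E → F}

theorem fderiv_fderiv_apply_comm (hC : ContDiff ℝ 2 C) (p u v : E) :
    fderiv ℝ (fderiv ℝ C) p u v = fderiv ℝ (fderiv ℝ C) p v u :=
  (hC.contDiffAt.isSymmSndFDerivAt (by simp)).eq u v

theorem differentiable_fderiv_fderiv (hC : ContDiff ℝ 3 C) :
    Differentiable ℝ (fderiv ℝ (fderiv ℝ C)) :=
  ((hC.fderiv_right (m := 2) (by norm_num)).fderiv_right (m := 1) (by norm_num)).differentiable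
    one_ne_zero

theorem fderiv_fderiv_fderiv_apply_rotate (hC : ContDiff ℝ 3 C) (p x y z : E) :
    fderiv ℝ (fderiv ℝ (fderiv ℝ C)) p x y z = fderiv ℝ (fderiv ℝ (fderiv ℝ C)) p z x y := by
  have hDC : ContDiff ℝ 2 (fderiv ℝ C) := hC.fderiv_right (by norm_num)
  have hD2C := differentiable_fderiv_fderiv hC
  have swap₁₂ (a b c : E) : fderiv ℝ (fderiv ℝ (fderiv ℝ C)) p a b c
      = fderiv ℝ (fderiv ℝ (fderiv ℝ C)) p b a c :=
    congrArg (· c) ((hDC.contDiffAt.isSymmSndFDerivAt (by simp)).eq a b)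
  -- `D³C` is the derivative of the symmetric `D²C`
  have swap₂₃ (a b c : E) : fderiv ℝ (fderiv ℝ (fderiv ℝ C)) p a b c
      = fderiv ℝ (fderiv ℝ (fderiv ℝ C)) p a c b := by
    have hD3C (b c : E) : fderiv ℝ (fun q => fderiv ℝ (fderiv ℝ C) q b c) p a
        = fderiv ℝ (fderiv ℝ (fderiv ℝ C)) p a b c := by
      rw [fderiv_clm_apply_const_apply ((hD2C p).clm_apply (differentiableAt_const b)),
        fderiv_clm_apply_const_apply (hD2C p)]
    rw [← hD3C, ← hD3C]
    congr 2
    exact funext fun q => fderiv_fderiv_apply_comm (hC.of_le (by norm_num)) q b c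
  rw [swap₁₂, swap₂₃, swap₁₂, swap₂₃]

end Symmetry

section Flatness

variable {C E' : E → E}

/-- The operator `H_λ` of the statement, with `l = λ`. -/
noncomputable def opH (C E' : E → E) (l : ℝ) (Y : E → E) : E → E :=
  fun p => mulC C Y E' p + l⁻¹ • (fderiv ℝ E' p (Y p) - Y p)

/-- `(P_{E'}(X, Y) - X∘Y)(p)`, which depends only on `X p = a` and `Y p = b` (`hmP_apply`). -/
noncomputable def eulerDefect (C E' : E → E) (p a b : E) : E :=
  fderiv ℝ (fderiv ℝ (fderiv ℝ C)) p (E' p) a b - fderiv ℝ E' p (fderiv ℝ (fderiv ℝ C) p a b)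
    + fderiv ℝ (fderiv ℝ C) p (fderiv ℝ E' p a) b + fderiv ℝ (fderiv ℝ C) p a (fderiv ℝ E' p b)
    - fderiv ℝ (fderiv ℝ C) p a b

theorem hmP_apply_s13 (hC : ContDiff ℝ 3 C) {X Y : E → E} {p : E} (hX : DifferentiableAt ℝ X p)
    (hY : DifferentiableAt ℝ Y p) :
    hmP C E' X Y p = eulerDefect C E' p (X p) (Y p) + mulC C X Y p := by
  unfold hmP lieB mulC eulerDefect
  rw [fderiv_clm_apply₂_apply (differentiable_fderiv_fderiv hC p) hX hY]
  simp only [map_sub, sub_apply]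
  abel

theorem fderiv_opH_sub_opH_fderiv (hC : ContDiff ℝ 3 C) (hE' : ContDiff ℝ 2 E') (l : ℝ)
    {X Y : E → E} {p : E} (hY : DifferentiableAt ℝ Y p) :
    fderiv ℝ (opH C E' l Y) p (X p) - opH C E' l (fun q => fderiv ℝ Y q (X q)) p
      = fderiv ℝ (fderiv ℝ (fderiv ℝ C)) p (X p) (Y p) (E' p)
        + fderiv ℝ (fderiv ℝ C) p (Y p) (fderiv ℝ E' p (X p))
        + l⁻¹ • fderiv ℝ (fderiv ℝ E') p (X p) (Y p) := by
  have hDE' : DifferentiableAt ℝ (fderiv ℝ E') p :=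
    (hE'.fderiv_right (m := 1) (by norm_num)).differentiable one_ne_zero p
  have hE'p : DifferentiableAt ℝ E' p := hE'.differentiable (by norm_num) p
  have hD2C := differentiable_fderiv_fderiv hC p
  have hYE' : DifferentiableAt ℝ (fun q => fderiv ℝ E' q (Y q) - Y q) p :=
    (hDE'.clm_apply hY).sub hY
  unfold opH mulC
  rw [fderiv_fun_add ((hD2C.clm_apply hY).clm_apply hE'p) (hYE'.fun_const_smul l⁻¹),
    fderiv_fun_const_smul hYE', fderiv_fun_sub (hDE'.clm_apply hY) hY,
    add_apply, smul_apply, sub_apply,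
    fderiv_clm_apply₂_apply hD2C hY hE'p, fderiv_clm_apply_apply hDE' hY]
  module

theorem opH_flatness_defect (hC : ContDiff ℝ 3 C) (hE' : ContDiff ℝ 2 E')
    (hassoc : ∀ p u v w : E,
      fderiv ℝ (fderiv ℝ C) p (fderiv ℝ (fderiv ℝ C) p u v) w
        = fderiv ℝ (fderiv ℝ C) p u (fderiv ℝ (fderiv ℝ C) p v w))
    (l : ℝ) {X Y : E → E} {p : E} (hY : DifferentiableAt ℝ Y p) :
    mulC C X (opH C E' l Y) p
        + l⁻¹ • (fderiv ℝ (opH C E' l Y) p (X p) - mulC C X Y p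
          - opH C E' l (fun q => fderiv ℝ Y q (X q)) p)
        - opH C E' l (mulC C X Y) p
      = l⁻¹ • eulerDefect C E' p (X p) (Y p)
        + (l⁻¹) ^ 2 • fderiv ℝ (fderiv ℝ E') p (X p) (Y p) := by
  rw [sub_right_comm _ (mulC C X Y p), fderiv_opH_sub_opH_fderiv hC hE' l hY,
    fderiv_fderiv_fderiv_apply_rotate hC p (X p),
    fderiv_fderiv_apply_comm (hC.of_le (by norm_num)) p (Y p)]
  simp only [opH, mulC, eulerDefect, hassoc, map_add, map_sub, map_smul]
  module

theorem flatness_iff (hC : ContDiff ℝ 3 C) (hE' : ContDiff ℝ 2 E')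
    (hassoc : ∀ p u v w : E,
      fderiv ℝ (fderiv ℝ C) p (fderiv ℝ (fderiv ℝ C) p u v) w
        = fderiv ℝ (fderiv ℝ C) p u (fderiv ℝ (fderiv ℝ C) p v w)) :
    (∀ l : ℝ, l ≠ 0 → ∀ X Y : E → E, ContDiff ℝ ∞ X → ContDiff ℝ ∞ Y →
      opH C E' l (mulC C X Y)
        = fun p => mulC C X (opH C E' l Y) p
          + l⁻¹ • (fderiv ℝ (opH C E' l Y) p (X p) - mulC C X Y p
            - opH C E' l (fun q => fderiv ℝ Y q (X q)) p))
      ↔ ∀ p a b, eulerDefect C E' p a b = 0 ∧ fderiv ℝ (fderiv ℝ E') p a b = 0 := by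
  calc _ ↔ ∀ X Y : E → E, ContDiff ℝ ∞ X → ContDiff ℝ ∞ Y → ∀ p, ∀ l : ℝ, l ≠ 0 →
          l⁻¹ • eulerDefect C E' p (X p) (Y p)
            + (l⁻¹) ^ 2 • fderiv ℝ (fderiv ℝ E') p (X p) (Y p) = 0 := by
        refine ⟨fun h X Y hX hY p l hl => ?_, fun h l hl X Y hX hY => funext fun p => ?_⟩
        · rw [← opH_flatness_defect hC hE' hassoc l (hY.differentiable (by simp) p), sub_eq_zero]
          exact (congrFun (h l hl X Y hX hY) p).symm
        · rw [eq_comm, ← sub_eq_zero,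
            opH_flatness_defect hC hE' hassoc l (hY.differentiable (by simp) p), h X Y hX hY p l hl]
    _ ↔ ∀ X Y : E → E, ContDiff ℝ ∞ X → ContDiff ℝ ∞ Y → ∀ p,
          eulerDefect C E' p (X p) (Y p) = 0 ∧ fderiv ℝ (fderiv ℝ E') p (X p) (Y p) = 0 := by
        simp only [forall_inv_smul_add_inv_sq_smul_eq_zero_iff]
    _ ↔ _ := forall_contDiff_pair_iff fun p a b =>
        eulerDefect C E' p a b = 0 ∧ fderiv ℝ (fderiv ℝ E') p a b = 0

theorem eulerField_iff (hC : ContDiff ℝ 3 C) :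
    (∀ X Y : E → E, ContDiff ℝ ∞ X → ContDiff ℝ ∞ Y → hmP C E' X Y = mulC C X Y)
      ↔ ∀ p a b, eulerDefect C E' p a b = 0 := by
  calc _ ↔ ∀ X Y : E → E, ContDiff ℝ ∞ X → ContDiff ℝ ∞ Y → ∀ p,
          eulerDefect C E' p (X p) (Y p) = 0 := by
        refine forall₄_congr fun X Y hX hY => funext_iff.trans (forall_congr' fun p => ?_)
        rw [hmP_apply_s13 hC (hX.differentiable (by simp) p) (hY.differentiable (by simp) p),
          add_eq_right]
    _ ↔ _ := forall_contDiff_pair_iff fun p a b => eulerDefect C E' p a b = 0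

theorem forall_exists_lieB_const_iff (hE' : ContDiff ℝ 2 E') :
    (∀ z : E, ∃ w : E, ∀ p : E, lieB E' (fun _ => z) p = w)
      ↔ ∀ p a b, fderiv ℝ (fderiv ℝ E') p a b = 0 := by
  have hDE' : Differentiable ℝ (fderiv ℝ E') :=
    (hE'.fderiv_right (m := 1) (by norm_num)).differentiable one_ne_zero
  have hlieB (z : E) : lieB E' (fun _ => z) = fun p => -fderiv ℝ E' p z :=
    funext fun p => by simp [lieB]
  calc _ ↔ ∀ z p, fderiv ℝ (fun q => -fderiv ℝ E' q z) p = 0 := forall_congr' fun z => by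
        rw [hlieB]
        exact exists_forall_eq_iff_fderiv_eq_zero (hDE'.clm_apply (differentiable_const z)).neg
    _ ↔ ∀ z p a, fderiv ℝ (fderiv ℝ E') p a z = 0 := by
        simp only [fderiv_fun_neg, neg_eq_zero, ContinuousLinearMap.ext_iff,
          fderiv_clm_apply_const_apply (hDE' _), zero_apply]
    _ ↔ _ := ⟨fun h p a z => h z p a, fun h z p a => h p a z⟩

end Flatness

theorem stmt13_general {E : Type*} [NormedAddCommGroup E] [NormedSpace ℝ E]
    (C : E → E) (hC : ContDiff ℝ ∞ C)
    (hassoc : ∀ p u v w : E,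
      fderiv ℝ (fderiv ℝ C) p (fderiv ℝ (fderiv ℝ C) p u v) w
        = fderiv ℝ (fderiv ℝ C) p u (fderiv ℝ (fderiv ℝ C) p v w))
    (u : E)
    (E' : E → E) (hE' : ContDiff ℝ ∞ E')
    (H : ℝ → (E → E) → (E → E))
    (hH : ∀ (l : ℝ) (Y : E → E),
      H l Y = fun p => mulC C Y E' p + l⁻¹ • (fderiv ℝ E' p (Y p) - Y p)) :
    (∀ l : ℝ, l ≠ 0 → ∀ X Y : E → E, ContDiff ℝ ∞ X → ContDiff ℝ ∞ Y →
      H l (mulC C X Y)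
        = fun p => mulC C X (H l Y) p
          + l⁻¹ • (fderiv ℝ (H l Y) p (X p) - mulC C X Y p
            - H l (fun q => fderiv ℝ Y q (X q)) p)) ↔
    ((∀ X Y : E → E, ContDiff ℝ ∞ X → ContDiff ℝ ∞ Y →
        hmP C E' X Y = mulC C X Y) ∧
     (∀ z : E, ∃ w : E, ∀ p : E, lieB E' (fun _ => z) p = w)) := by
  obtain rfl : H = opH C E' := funext fun l => funext (hH l)
  have hC3 : ContDiff ℝ 3 C := hC.of_le ENat.LEInfty.out
  have hE'2 : ContDiff ℝ 2 E' := hE'.of_le ENat.LEInfty.out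
  rw [flatness_iff hC3 hE'2 hassoc, eulerField_iff hC3, forall_exists_lieB_const_iff hE'2]
  simp only [forall_and]

/-- the operator `H_λ(Y) = Y∘E' + λ⁻¹(∇_Y E' - Y)` satisfies the
flatness condition (3.5) for every `λ ≠ 0` iff `E'` is an Euler field of weight 1
compatible with `∇`. -/
theorem stmt13 {E : Type*} [NormedAddCommGroup E] [NormedSpace ℝ E] [FiniteDimensional ℝ E]
    (C : E → E) (hC : ContDiff ℝ ∞ C)
    (hassoc : ∀ p u v w : E,
      fderiv ℝ (fderiv ℝ C) p (fderiv ℝ (fderiv ℝ C) p u v) w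
        = fderiv ℝ (fderiv ℝ C) p u (fderiv ℝ (fderiv ℝ C) p v w))
    (e : E → E) (u : E) (he : e = fun _ => u)
    (hid : ∀ p v : E, fderiv ℝ (fderiv ℝ C) p (e p) v = v)
    (E' : E → E) (hE' : ContDiff ℝ ∞ E')
    (H : ℝ → (E → E) → (E → E))
    (hH : ∀ (l : ℝ) (Y : E → E),
      H l Y = fun p => mulC C Y E' p + l⁻¹ • (fderiv ℝ E' p (Y p) - Y p)) :
    (∀ l : ℝ, l ≠ 0 → ∀ X Y : E → E, ContDiff ℝ ∞ X → ContDiff ℝ ∞ Y →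
      H l (mulC C X Y)
        = fun p => mulC C X (H l Y) p
          + l⁻¹ • (fderiv ℝ (H l Y) p (X p) - mulC C X Y p
            - H l (fun q => fderiv ℝ Y q (X q)) p)) ↔
    ((∀ X Y : E → E, ContDiff ℝ ∞ X → ContDiff ℝ ∞ Y →
        hmP C E' X Y = mulC C X Y) ∧
     (∀ z : E, ∃ w : E, ∀ p : E, lieB E' (fun _ => z) p = w)) :=
  stmt13_general C hC hassoc u E' hE' H hH
end

section
/- Let E be a finite-dimensional real normed vector space and C : E → E a C^∞ map such that the induced multiplication ∘ is associative. Let E₁ and E₂ be Euler fields of weights d₁ and d₂ respectively, i.e. smooth vector fields with P_{E₁}(X,Y) = d₁·(X∘Y) and P_{E₂}(X,Y) = d₂·(X∘Y) for all smooth vector fields X, Y. Then the commutator [E₁, E₂] is an Euler field of weight zero: P_{[E₁,E₂]}(X,Y) = 0 for all smooth vector fields X, Y. -/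
/-!
Write `ad F = [F, ·]`. Being Euler of weight `d` means
`ad F (X ∘ Y) = d • X ∘ Y + ad F X ∘ Y + X ∘ ad F Y`, and by the Jacobi identity
`ad [E₁, E₂] = ad E₁ ∘ ad E₂ - ad E₂ ∘ ad E₁`. Expanding `ad E₁ (ad E₂ (X ∘ Y))` with the
Euler rule twice, every term except `ad E₁ (ad E₂ X) ∘ Y` and `X ∘ ad E₁ (ad E₂ Y)` is symmetric
under `(E₁, d₁) ↔ (E₂, d₂)`, so in the commutator only the Leibniz terms for `ad [E₁, E₂]`
survive.
-/

open ContDiff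

variable {E : Type*} [NormedAddCommGroup E] [NormedSpace ℝ E]

lemma contDiff_mulC {C X Y : E → E} (hC : ContDiff ℝ ∞ C) (hX : ContDiff ℝ ∞ X)
    (hY : ContDiff ℝ ∞ Y) : ContDiff ℝ ∞ (mulC C X Y) :=
  (((hC.fderiv_right le_rfl).fderiv_right le_rfl).clm_apply hX).clm_apply hY

lemma contDiff_lieB {X Y : E → E} (hX : ContDiff ℝ ∞ X) (hY : ContDiff ℝ ∞ Y) :
    ContDiff ℝ ∞ (lieB X Y) :=
  hX.lieBracket_vectorField hY le_rfl

lemma lieB_add_apply (X : E → E) {f g : E → E} {p : E} (hf : DifferentiableAt ℝ f p)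
    (hg : DifferentiableAt ℝ g p) : lieB X (f + g) p = lieB X f p + lieB X g p :=
  VectorField.lieBracket_add_right hf hg

lemma lieB_const_smul_apply (X : E → E) {f : E → E} {p : E} (c : ℝ)
    (hf : DifferentiableAt ℝ f p) : lieB X (c • f) p = c • lieB X f p :=
  VectorField.lieBracket_const_smul_right hf

lemma lieB_lieB {X Y Z : E → E} (hX : ContDiff ℝ 2 X) (hY : ContDiff ℝ 2 Y)
    (hZ : ContDiff ℝ 2 Z) : lieB (lieB X Y) Z = lieB X (lieB Y Z) - lieB Y (lieB X Z) := by
  funext p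
  rw [Pi.sub_apply, eq_sub_iff_add_eq]
  exact (VectorField.leibniz_identity_lieBracket (by simp)
    hX.contDiffAt hY.contDiffAt hZ.contDiffAt).symm

lemma mulC_sub_left (C X X' Y : E → E) : mulC C (X - X') Y = mulC C X Y - mulC C X' Y := by
  funext p
  simp only [mulC, Pi.sub_apply, map_sub, sub_apply]

lemma mulC_sub_right (C X Y Y' : E → E) : mulC C X (Y - Y') = mulC C X Y - mulC C X Y' := by
  funext p
  simp only [mulC, Pi.sub_apply, map_sub]

def IsEulerField (C F : E → E) (d : ℝ) : Prop :=
  ∀ X Y : E → E, ContDiff ℝ ∞ X → ContDiff ℝ ∞ Y → hmP C F X Y = fun p => d • mulC C X Y p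

namespace IsEulerField

variable {C F G X Y : E → E} {d e : ℝ}

lemma lieB_mulC (hF : IsEulerField C F d) (hX : ContDiff ℝ ∞ X) (hY : ContDiff ℝ ∞ Y) :
    lieB F (mulC C X Y) = d • mulC C X Y + mulC C (lieB F X) Y + mulC C X (lieB F Y) := by
  funext p
  have h := congrFun (hF X Y hX hY) p
  simp only [hmP] at h
  simp only [Pi.add_apply, Pi.smul_apply, ← h]
  abel

lemma lieB_lieB_mulC_apply (hC : ContDiff ℝ ∞ C) (hF : IsEulerField C F d)
    (hG : IsEulerField C G e) (hGs : ContDiff ℝ ∞ G) (hX : ContDiff ℝ ∞ X)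
    (hY : ContDiff ℝ ∞ Y) (p : E) :
    lieB F (lieB G (mulC C X Y)) p =
      (d * e) • mulC C X Y p + e • (mulC C (lieB F X) Y p + mulC C X (lieB F Y) p)
        + d • (mulC C (lieB G X) Y p + mulC C X (lieB G Y) p)
        + mulC C (lieB F (lieB G X)) Y p + mulC C (lieB G X) (lieB F Y) p
        + mulC C (lieB F X) (lieB G Y) p + mulC C X (lieB F (lieB G Y)) p := by
  have hGX := contDiff_lieB hGs hX
  have hGY := contDiff_lieB hGs hY
  have hdiff {Z : E → E} (hZ : ContDiff ℝ ∞ Z) : DifferentiableAt ℝ Z p :=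
    hZ.differentiable (by simp) p
  have hXY := hdiff (contDiff_mulC hC hX hY)
  have hGXY := hdiff (contDiff_mulC hC hGX hY)
  have hXGY := hdiff (contDiff_mulC hC hX hGY)
  rw [hG.lieB_mulC hX hY, lieB_add_apply _ ((hXY.const_smul e).add hGXY) hXGY,
    lieB_add_apply _ (hXY.const_smul e) hGXY, lieB_const_smul_apply _ _ hXY,
    hF.lieB_mulC hX hY, hF.lieB_mulC hGX hY, hF.lieB_mulC hX hGY]
  simp only [Pi.add_apply, Pi.smul_apply]
  module

theorem lieB (hC : ContDiff ℝ ∞ C) (hF : IsEulerField C F d) (hG : IsEulerField C G e)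
    (hFs : ContDiff ℝ ∞ F) (hGs : ContDiff ℝ ∞ G) : IsEulerField C (lieB F G) 0 := by
  intro X Y hX hY
  have h2 {Z : E → E} (hZ : ContDiff ℝ ∞ Z) : ContDiff ℝ 2 Z :=
    hZ.of_le (WithTop.coe_le_coe.2 le_top)
  funext p
  simp only [hmP, lieB_lieB (h2 hFs) (h2 hGs) (h2 hX), lieB_lieB (h2 hFs) (h2 hGs) (h2 hY),
    lieB_lieB (h2 hFs) (h2 hGs) (h2 (contDiff_mulC hC hX hY)), mulC_sub_left, mulC_sub_right,
    Pi.sub_apply, hF.lieB_lieB_mulC_apply hC hG hGs hX hY p,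
    hG.lieB_lieB_mulC_apply hC hF hFs hX hY p, zero_smul]
  module

end IsEulerField

theorem stmt14_general {E : Type*} [NormedAddCommGroup E] [NormedSpace ℝ E]
    (C : E → E) (hC : ContDiff ℝ ∞ C)
    (E1 E2 : E → E) (hE1 : ContDiff ℝ ∞ E1) (hE2 : ContDiff ℝ ∞ E2)
    (d1 d2 : ℝ)
    (hEuler1 : ∀ X Y : E → E, ContDiff ℝ ∞ X → ContDiff ℝ ∞ Y →
      hmP C E1 X Y = fun p => d1 • mulC C X Y p)
    (hEuler2 : ∀ X Y : E → E, ContDiff ℝ ∞ X → ContDiff ℝ ∞ Y →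
      hmP C E2 X Y = fun p => d2 • mulC C X Y p) :
    ∀ X Y : E → E, ContDiff ℝ ∞ X → ContDiff ℝ ∞ Y →
      hmP C (lieB E1 E2) X Y = fun _ => (0 : E) := by
  intro X Y hX hY
  simpa only [zero_smul] using
    IsEulerField.lieB hC hEuler1 hEuler2 hE1 hE2 X Y hX hY

/-- the commutator of two Euler fields is an Euler field of weight
zero. -/
theorem stmt14 {E : Type*} [NormedAddCommGroup E] [NormedSpace ℝ E] [FiniteDimensional ℝ E]
    (C : E → E) (hC : ContDiff ℝ ∞ C)
    (hassoc : ∀ p u v w : E,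
      fderiv ℝ (fderiv ℝ C) p (fderiv ℝ (fderiv ℝ C) p u v) w
        = fderiv ℝ (fderiv ℝ C) p u (fderiv ℝ (fderiv ℝ C) p v w))
    (E1 E2 : E → E) (hE1 : ContDiff ℝ ∞ E1) (hE2 : ContDiff ℝ ∞ E2)
    (d1 d2 : ℝ)
    (hEuler1 : ∀ X Y : E → E, ContDiff ℝ ∞ X → ContDiff ℝ ∞ Y →
      hmP C E1 X Y = fun p => d1 • mulC C X Y p)
    (hEuler2 : ∀ X Y : E → E, ContDiff ℝ ∞ X → ContDiff ℝ ∞ Y →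
      hmP C E2 X Y = fun p => d2 • mulC C X Y p) :
    ∀ X Y : E → E, ContDiff ℝ ∞ X → ContDiff ℝ ∞ Y →
      hmP C (lieB E1 E2) X Y = fun _ => (0 : E) :=
  stmt14_general C hC E1 E2 hE1 hE2 d1 d2 hEuler1 hEuler2
end

section
/- Let E be a finite-dimensional real normed vector space, B : E → (E →L[ℝ] E) a C^∞ map, and u, c ∈ E such that B(p)(u) = p + c for all p ∈ E. Assume the End(E)-valued one-form DB satisfies DB ∧ DB = 0, i.e. for all p, v, w ∈ E the endomorphisms (DB)(p)(v) and (DB)(p)(w) of E commute: (DB)(p)(v) ∘ (DB)(p)(w) = (DB)(p)(w) ∘ (DB)(p)(v). Then (DB)(p)(v)(w) = (DB)(p)(w)(v) for all p, v, w ∈ E. -/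
open ContDiff

/-- if `B(p)(u) = p + c` and the one-form `DB` satisfies
`DB ∧ DB = 0`, then `DB(p)` is a symmetric bilinear map. -/
theorem stmt15 {E : Type*} [NormedAddCommGroup E] [NormedSpace ℝ E] [FiniteDimensional ℝ E]
    (B : E → (E →L[ℝ] E)) (hB : ContDiff ℝ ∞ B) (u c : E)
    (hBu : ∀ p : E, B p u = p + c)
    (hcomm : ∀ p v w : E,
      (fderiv ℝ B p v).comp (fderiv ℝ B p w) = (fderiv ℝ B p w).comp (fderiv ℝ B p v)) :
    ∀ p v w : E, fderiv ℝ B p v w = fderiv ℝ B p w v := by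
  have hd : Differentiable ℝ B := hB.differentiable (by norm_num)
  have h1 : ∀ p v : E, fderiv ℝ B p v u = v := by
    intro p v
    have heq : (fun p => B p u) = fun p : E => p + c := funext hBu
    have h2 : fderiv ℝ (fun p => B p u) p = ContinuousLinearMap.id ℝ E := by
      rw [heq]
      have : fderiv ℝ (fun p : E => p + c) p = fderiv ℝ (id : E → E) p := by
        simp [fderiv_add_const]
      rw [this, fderiv_id]
    have h3 : fderiv ℝ (fun p => B p u) p =
        (B p).comp (fderiv ℝ (fun _ : E => u) p) + (fderiv ℝ B p).flip u := by
      exact fderiv_clm_apply (hd p) (differentiableAt_const u)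
    rw [h2] at h3
    have := congrArg (fun f => f v) h3
    simpa using this.symm
  intro p v w
  have hc := congrArg (fun f => f u) (hcomm p v w)
  simpa [h1] using hc
end
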